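/- Let W : GL⁺(2) → ℝ be objective, isotropic and isochoric. Then there exists a unique function f : [0,∞) → ℝ such that W(F) = f((log(λ₁/λ₂))²) for every F ∈ GL⁺(2) and every factorization F = R₁·diag(λ₁, λ₂)·R₂ with R₁, R₂ ∈ SO(2) and λ₁, λ₂ > 0; moreover f(θ) = W(diag(exp(√θ), 1)) for all θ ≥ 0. -/
import Mathlib


open Matrix Set

noncomputable section

/-- The space of real 2×2 matrices. -/
abbrev Mat2 : Type := Matrix (Fin 2) (Fin 2) ℝ

/-- The special orthogonal group SO(2): orthogonal 2×2 matrices with determinant 1. -/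
def SO2 : Set Mat2 := {Q : Mat2 | Qᵀ * Q = 1 ∧ Q.det = 1}

/-- A function `W` (viewed on GL⁺(2) = {F | 0 < det F}) is polyconvex if there is a
convex function `P : ℝ^{2×2} × ℝ → ℝ ∪ {+∞}` with `W F = P (F, det F)` on GL⁺(2). -/
def Polyconvex (W : Mat2 → ℝ) : Prop :=
  ∃ P : Mat2 × ℝ → EReal,
    (∀ x y : Mat2 × ℝ, ∀ a b : ℝ, 0 ≤ a → 0 ≤ b → a + b = 1 →
      P (a • x + b • y) ≤ (a : EReal) * P x + (b : EReal) * P y) ∧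
    (∀ F : Mat2, 0 < F.det → (W F : EReal) = P (F, F.det))

/-- Rank-one convexity of `W` on GL⁺(2): convexity along rank-one line segments
lying in GL⁺(2). -/
def RankOneConvex (W : Mat2 → ℝ) : Prop :=
  ∀ F : Mat2, 0 < F.det → ∀ ξ η : Fin 2 → ℝ, ∀ θ : ℝ, θ ∈ Set.Icc (0:ℝ) 1 →
    (∀ t ∈ Set.Icc (0:ℝ) 1, 0 < (F + t • vecMulVec ξ η).det) →
    W (F + (1 - θ) • vecMulVec ξ η) ≤ θ * W F + (1 - θ) * W (F + vecMulVec ξ η)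

/-- Objectivity and isotropy: bi-SO(2)-invariance on GL⁺(2). -/
def ObjectiveIsotropic (W : Mat2 → ℝ) : Prop :=
  ∀ F : Mat2, 0 < F.det → ∀ Q₁ Q₂ : Mat2, Q₁ ∈ SO2 → Q₂ ∈ SO2 →
    W (Q₁ * F * Q₂) = W F

/-- Isochoric: invariance under positive scaling on GL⁺(2). -/
def Isochoric (W : Mat2 → ℝ) : Prop :=
  ∀ F : Mat2, 0 < F.det → ∀ a : ℝ, 0 < a → W (a • F) = W F

/-- The 2×2 diagonal matrix diag(a, b). -/
def diag2 (a b : ℝ) : Mat2 := !![a, 0; 0, b]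

/-- The squared Frobenius norm of a 2×2 matrix. -/
def frobSq (F : Mat2) : ℝ := ∑ i, ∑ j, (F i j) ^ 2

/-- The operator norm of `F` induced by the Euclidean norm on ℝ²:
the supremum of ‖F·x‖ over Euclidean-unit vectors x. -/
def opNorm2 (F : Mat2) : ℝ :=
  sSup {r : ℝ | ∃ x : Fin 2 → ℝ, (x 0) ^ 2 + (x 1) ^ 2 = 1 ∧
    r = Real.sqrt ((F.mulVec x 0) ^ 2 + (F.mulVec x 1) ^ 2)}

lemma diag2_det (a b : ℝ) : (diag2 a b).det = a * b := by
  simp [diag2, Matrix.det_fin_two_of]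

lemma one_mem_SO2 : (1 : Mat2) ∈ SO2 := by
  constructor <;> simp

lemma rot_mem_SO2 : (!![0, -1; 1, 0] : Mat2) ∈ SO2 := by
  constructor
  · ext i j; fin_cases i <;> fin_cases j <;>
      simp [Matrix.mul_apply, Fin.sum_univ_two, Matrix.transpose_apply, Matrix.vecHead, Matrix.vecTail]
  · simp [Matrix.det_fin_two_of]

lemma rot'_mem_SO2 : (!![0, 1; -1, 0] : Mat2) ∈ SO2 := by
  constructor
  · ext i j; fin_cases i <;> fin_cases j <;>
      simp [Matrix.mul_apply, Fin.sum_univ_two, Matrix.transpose_apply, Matrix.vecHead, Matrix.vecTail]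
  · simp [Matrix.det_fin_two_of]

lemma W_swap (W : Mat2 → ℝ) (hOI : ObjectiveIsotropic W) (a b : ℝ)
    (ha : 0 < a) (hb : 0 < b) : W (diag2 a b) = W (diag2 b a) := by
  have hdet : 0 < (diag2 a b).det := by rw [diag2_det]; positivity
  have h := hOI (diag2 a b) hdet _ _ rot_mem_SO2 rot'_mem_SO2
  have heq : (!![0, -1; 1, 0] : Mat2) * diag2 a b * !![0, 1; -1, 0] = diag2 b a := by
    ext i j; fin_cases i <;> fin_cases j <;>
      simp [diag2, Matrix.mul_apply, Fin.sum_univ_two]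
  rw [heq] at h
  exact h.symm

lemma W_scale (W : Mat2 → ℝ) (hIso : Isochoric W) (a b : ℝ)
    (ha : 0 < a) (hb : 0 < b) : W (diag2 a b) = W (diag2 (a / b) 1) := by
  have hdet : 0 < (diag2 (a / b) 1).det := by rw [diag2_det]; positivity
  have h := hIso (diag2 (a / b) 1) hdet b hb
  have heq : b • diag2 (a / b) 1 = diag2 a b := by
    ext i j; fin_cases i <;> fin_cases j <;>
      simp [diag2, Matrix.smul_apply, mul_div_cancel₀, hb.ne']
  rw [heq] at h
  exact h

/-- representation of objective, isotropic, isochoric `W` via a unique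
function `f` of `(log(λ₁/λ₂))²`, with `f(θ) = W(diag(exp √θ, 1))`. -/
theorem isochoric_representation_logSq (W : Mat2 → ℝ)
    (hOI : ObjectiveIsotropic W) (hIso : Isochoric W) :
    ∃ f : ℝ → ℝ,
      (∀ R₁ R₂ : Mat2, R₁ ∈ SO2 → R₂ ∈ SO2 → ∀ l₁ l₂ : ℝ, 0 < l₁ → 0 < l₂ →
        W (R₁ * diag2 l₁ l₂ * R₂) = f ((Real.log (l₁ / l₂)) ^ 2)) ∧
      (∀ θ : ℝ, 0 ≤ θ → f θ = W (diag2 (Real.exp (Real.sqrt θ)) 1)) ∧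
      (∀ f' : ℝ → ℝ,
        (∀ R₁ R₂ : Mat2, R₁ ∈ SO2 → R₂ ∈ SO2 → ∀ l₁ l₂ : ℝ, 0 < l₁ → 0 < l₂ →
          W (R₁ * diag2 l₁ l₂ * R₂) = f' ((Real.log (l₁ / l₂)) ^ 2)) →
        ∀ θ : ℝ, 0 ≤ θ → f' θ = f θ) := by
  set f : ℝ → ℝ := fun θ => W (diag2 (Real.exp (Real.sqrt θ)) 1) with hf
  have key : ∀ l₁ l₂ : ℝ, 0 < l₁ → 0 < l₂ →
      W (diag2 l₁ l₂) = f ((Real.log (l₁ / l₂)) ^ 2) := by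
    intro l₁ l₂ h₁ h₂
    rcases le_total l₂ l₁ with hle | hle
    · have hr : (1 : ℝ) ≤ l₁ / l₂ := (one_le_div h₂).mpr hle
      have hlog : 0 ≤ Real.log (l₁ / l₂) := Real.log_nonneg hr
      have hsq : Real.sqrt ((Real.log (l₁ / l₂)) ^ 2) = Real.log (l₁ / l₂) := by
        rw [Real.sqrt_sq hlog]
      rw [W_scale W hIso l₁ l₂ h₁ h₂, hf]
      simp only [hsq, Real.exp_log (by positivity : (0:ℝ) < l₁ / l₂)]
    · have hr : (1 : ℝ) ≤ l₂ / l₁ := (one_le_div h₁).mpr hle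
      have hlog : 0 ≤ Real.log (l₂ / l₁) := Real.log_nonneg hr
      have hlogneg : Real.log (l₁ / l₂) = - Real.log (l₂ / l₁) := by
        rw [← Real.log_inv]; congr 1; field_simp
      have hsq : Real.sqrt ((Real.log (l₁ / l₂)) ^ 2) = Real.log (l₂ / l₁) := by
        rw [hlogneg, neg_sq, Real.sqrt_sq hlog]
      rw [W_swap W hOI l₁ l₂ h₁ h₂, W_scale W hIso l₂ l₁ h₂ h₁, hf]
      simp only [hsq, Real.exp_log (by positivity : (0:ℝ) < l₂ / l₁)]
  have main : ∀ R₁ R₂ : Mat2, R₁ ∈ SO2 → R₂ ∈ SO2 → ∀ l₁ l₂ : ℝ, 0 < l₁ → 0 < l₂ →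
      W (R₁ * diag2 l₁ l₂ * R₂) = f ((Real.log (l₁ / l₂)) ^ 2) := by
    intro R₁ R₂ hR₁ hR₂ l₁ l₂ h₁ h₂
    have hdet : 0 < (diag2 l₁ l₂).det := by rw [diag2_det]; positivity
    rw [hOI (diag2 l₁ l₂) hdet R₁ R₂ hR₁ hR₂]
    exact key l₁ l₂ h₁ h₂
  refine ⟨f, main, fun θ hθ => rfl, ?_⟩
  intro f' hf' θ hθ
  have h := hf' 1 1 one_mem_SO2 one_mem_SO2 (Real.exp (Real.sqrt θ)) 1
    (Real.exp_pos _) one_pos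
  rw [one_mul, mul_one] at h
  have hlog : Real.log (Real.exp (Real.sqrt θ) / 1) = Real.sqrt θ := by
    rw [div_one, Real.log_exp]
  rw [hlog, Real.sq_sqrt hθ] at h
  rw [← h, hf]
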